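/- Let 0 < s < r, let B = {X ∈ ℝ³ : ‖X‖ < r} carry the quadratic response W(X,F) = f(‖X‖²) • (F Fᵀ − 1), and assume f : ℝ → ℝ satisfies: f(t) = 1 for all t ∈ [0, s²], f is strictly monotone on [s², ∞), and f(t) ≠ 0 for all t ∈ [0, ∞). Then the material groupoid, as a subset of B × B × GL(3,ℝ), is exactly Ω(B) = {(X, Y, F) : X, Y ∈ B, F Fᵀ = 1, and (‖X‖ = ‖Y‖ or (‖X‖ ≤ s and ‖Y‖ ≤ s))}. -/

import Mathlib

/-
Right multiplication by an orthogonal `F` leaves `G Gᵀ` unchanged, and testing the defining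
identity at `G = 1` and at a non-orthogonal `G` shows that a material isomorphism is exactly an
orthogonal `F` with `f(‖X‖²) = f(‖Y‖²)`. The condition on the radii is then one-variable analysis:
`t ↦ f(t²)` is constant on `[0, s]` and injective on `[s, ∞)`, so it takes equal values at
`x, y ≥ 0` iff `max x s = max y s`.
-/

open Matrix

/-- `F ∈ GL(3,ℝ)` is a material isomorphism from `X` to `Y` for the
mechanical response `W`: `W (X, G * F) = W (Y, G)` for every `G ∈ GL(3,ℝ)`. -/
def IsMatIso {V : Type*} (W : EuclideanSpace ℝ (Fin 3) → GL (Fin 3) ℝ → V)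
    (X Y : EuclideanSpace ℝ (Fin 3)) (F : GL (Fin 3) ℝ) : Prop :=
  ∀ G : GL (Fin 3) ℝ, W X (G * F) = W Y G

/-- The quadratic mechanical response `W(X,F) = f(‖X‖²) • (F Fᵀ − 1)`. -/
noncomputable def Wq (f : ℝ → ℝ) (X : EuclideanSpace ℝ (Fin 3)) (F : GL (Fin 3) ℝ) :
    Matrix (Fin 3) (Fin 3) ℝ :=
  f (‖X‖ ^ 2) • ((F : Matrix (Fin 3) (Fin 3) ℝ) * (F : Matrix (Fin 3) (Fin 3) ℝ)ᵀ - 1)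

open Set

theorem Matrix.mul_mul_transpose_of_mul_transpose_eq_one {n R : Type*} [Fintype n]
    [DecidableEq n] [CommSemiring R] (G : Matrix n n R) {F : Matrix n n R} (hF : F * Fᵀ = 1) :
    G * F * (G * F)ᵀ = G * Gᵀ := by
  rw [transpose_mul, Matrix.mul_assoc, ← Matrix.mul_assoc F, hF, Matrix.one_mul]

theorem Matrix.GeneralLinearGroup.exists_mul_transpose_ne_one {n : Type*} [Fintype n]
    [DecidableEq n] [Nonempty n] : ∃ G : GL n ℝ, (G : Matrix n n ℝ) * (G : Matrix n n ℝ)ᵀ ≠ 1 := by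
  refine ⟨GeneralLinearGroup.scalar n (Units.mk0 (2 : ℝ) two_ne_zero), fun h => ?_⟩
  obtain ⟨i⟩ := ‹Nonempty n›
  have := congrFun (congrFun h i) i
  norm_num [GeneralLinearGroup.coe_scalar] at this

theorem Wq_mul_of_mul_transpose_eq_one (f : ℝ → ℝ) (X : EuclideanSpace ℝ (Fin 3))
    (G : GL (Fin 3) ℝ) {F : GL (Fin 3) ℝ}
    (hF : (F : Matrix (Fin 3) (Fin 3) ℝ) * (F : Matrix (Fin 3) (Fin 3) ℝ)ᵀ = 1) :
    Wq f X (G * F) = Wq f X G := by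
  rw [Wq, Wq, Units.val_mul, mul_mul_transpose_of_mul_transpose_eq_one _ hF]

theorem isMatIso_Wq_iff {f : ℝ → ℝ} {X Y : EuclideanSpace ℝ (Fin 3)} {F : GL (Fin 3) ℝ}
    (hX : f (‖X‖ ^ 2) ≠ 0) :
    IsMatIso (Wq f) X Y F ↔
      (F : Matrix (Fin 3) (Fin 3) ℝ) * (F : Matrix (Fin 3) (Fin 3) ℝ)ᵀ = 1 ∧
        f (‖X‖ ^ 2) = f (‖Y‖ ^ 2) := by
  constructor
  · intro hiso
    have hF : (F : Matrix (Fin 3) (Fin 3) ℝ) * (F : Matrix (Fin 3) (Fin 3) ℝ)ᵀ = 1 := by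
      have h1 := hiso 1
      simp only [Wq, one_mul, Units.val_one, transpose_one, sub_self,
        smul_zero, smul_eq_zero, hX, false_or] at h1
      exact sub_eq_zero.mp h1
    obtain ⟨G, hG⟩ := GeneralLinearGroup.exists_mul_transpose_ne_one (n := Fin 3)
    have hGX := hiso G
    rw [Wq_mul_of_mul_transpose_eq_one f X G hF, Wq, Wq] at hGX
    exact ⟨hF, smul_left_injective ℝ (sub_ne_zero.mpr hG) hGX⟩
  · rintro ⟨hF, hXY⟩ G
    rw [Wq_mul_of_mul_transpose_eq_one f X G hF, Wq, Wq, hXY]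

theorem max_eq_max_iff {α : Type*} [LinearOrder α] {x y s : α} :
    max x s = max y s ↔ x = y ∨ x ≤ s ∧ y ≤ s := by
  grind

theorem apply_eq_apply_iff_of_injOn_Ici {α β : Type*} [LinearOrder α] {g : α → β} {a s x y : α}
    (hconst : ∀ t ∈ Icc a s, g t = g s) (hinj : InjOn g (Ici s)) (hx : a ≤ x) (hy : a ≤ y) :
    g x = g y ↔ x = y ∨ x ≤ s ∧ y ≤ s := by
  have hmax : ∀ t, a ≤ t → g (max t s) = g t := fun t ht => by
    rcases le_total t s with h | h
    · rw [max_eq_right h, hconst t ⟨ht, h⟩]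
    · rw [max_eq_left h]
  rw [← hmax x hx, ← hmax y hy, ← max_eq_max_iff]
  exact hinj.eq_iff (le_max_right x s) (le_max_right y s)

theorem matGroupoid_quadratic_locallyConstant_general (s r : ℝ) (hs : 0 < s)
    (f : ℝ → ℝ)
    (hf1 : ∀ t ∈ Set.Icc (0 : ℝ) (s ^ 2), f t = 1)
    (hf : StrictMonoOn f (Set.Ici (s ^ 2)) ∨ StrictAntiOn f (Set.Ici (s ^ 2)))
    (hf0 : ∀ t ∈ Set.Ici (0 : ℝ), f t ≠ 0) :
    {p : EuclideanSpace ℝ (Fin 3) × EuclideanSpace ℝ (Fin 3) × GL (Fin 3) ℝ |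
        ‖p.1‖ < r ∧ ‖p.2.1‖ < r ∧ IsMatIso (Wq f) p.1 p.2.1 p.2.2} =
      {p : EuclideanSpace ℝ (Fin 3) × EuclideanSpace ℝ (Fin 3) × GL (Fin 3) ℝ |
        ‖p.1‖ < r ∧ ‖p.2.1‖ < r ∧
          (p.2.2 : Matrix (Fin 3) (Fin 3) ℝ) * (p.2.2 : Matrix (Fin 3) (Fin 3) ℝ)ᵀ = 1 ∧
          (‖p.1‖ = ‖p.2.1‖ ∨ (‖p.1‖ ≤ s ∧ ‖p.2.1‖ ≤ s))} := by
  have hconst : ∀ t ∈ Icc 0 s, f (t ^ 2) = f (s ^ 2) := fun t ⟨ht0, hts⟩ => by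
    rw [hf1 _ ⟨sq_nonneg t, pow_le_pow_left₀ ht0 hts 2⟩, hf1 _ ⟨sq_nonneg s, le_rfl⟩]
  have hinj : InjOn (fun t => f (t ^ 2)) (Ici s) :=
    (hf.elim StrictMonoOn.injOn StrictAntiOn.injOn).comp
      ((pow_left_strictMonoOn₀ two_ne_zero).injOn.mono fun t ht => hs.le.trans ht)
      fun t ht => pow_le_pow_left₀ hs.le ht 2
  ext ⟨X, Y, F⟩
  simp only [mem_ofPred_eq, isMatIso_Wq_iff (hf0 _ (sq_nonneg ‖X‖)),
    apply_eq_apply_iff_of_injOn_Ici (g := fun t => f (t ^ 2)) hconst hinj (norm_nonneg X)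
      (norm_nonneg Y)]

/-- If `f ≡ 1` on `[0,s²]`, is strictly monotone on `[s²,∞)` and nowhere zero
on `[0,∞)`, then the material groupoid of the quadratic response is exactly
`{(X,Y,F) : X, Y ∈ B, F Fᵀ = 1, ‖X‖ = ‖Y‖ or (‖X‖ ≤ s and ‖Y‖ ≤ s)}`. -/
theorem matGroupoid_quadratic_locallyConstant (s r : ℝ) (hs : 0 < s) (hsr : s < r)
    (f : ℝ → ℝ)
    (hf1 : ∀ t ∈ Set.Icc (0 : ℝ) (s ^ 2), f t = 1)
    (hf : StrictMonoOn f (Set.Ici (s ^ 2)) ∨ StrictAntiOn f (Set.Ici (s ^ 2)))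
    (hf0 : ∀ t ∈ Set.Ici (0 : ℝ), f t ≠ 0) :
    {p : EuclideanSpace ℝ (Fin 3) × EuclideanSpace ℝ (Fin 3) × GL (Fin 3) ℝ |
        ‖p.1‖ < r ∧ ‖p.2.1‖ < r ∧ IsMatIso (Wq f) p.1 p.2.1 p.2.2} =
      {p : EuclideanSpace ℝ (Fin 3) × EuclideanSpace ℝ (Fin 3) × GL (Fin 3) ℝ |
        ‖p.1‖ < r ∧ ‖p.2.1‖ < r ∧
          (p.2.2 : Matrix (Fin 3) (Fin 3) ℝ) * (p.2.2 : Matrix (Fin 3) (Fin 3) ℝ)ᵀ = 1 ∧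
          (‖p.1‖ = ‖p.2.1‖ ∨ (‖p.1‖ ≤ s ∧ ‖p.2.1‖ ≤ s))} :=
  matGroupoid_quadratic_locallyConstant_general s r hs f hf1 hf hf0
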